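/- Let a, c, d, f ∈ ℝ with a ≠ 0, set β = (d−f)/a, γ = (d+f)/a, e₁(x,y) = c·x·y + (d+f)·x, e₂(x,y) = c·x·y + (d−f)·y. For differentiable u, v defined for x > 0, y > 0, t > 0, define {u,v} = −(a·x·y/t)(∂_x u·∂_y v − ∂_y u·∂_x v) + e₁·(∂_t u·∂_x v − ∂_x u·∂_t v) + e₂·(∂_t u·∂_y v − ∂_y u·∂_t v). Let Z(x,y,t) := log(t) + (c/a)·(x − y) + β·log(x) − γ·log(y). Then for every differentiable g and every point with x, y, t > 0, {Z, g} = 0. -/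

import Mathlib

/-- Partial derivative in the first coordinate of `ℝ³`. -/
noncomputable def pdx (u : ℝ × ℝ × ℝ → ℝ) (P : ℝ × ℝ × ℝ) : ℝ :=
  deriv (fun s => u (s, P.2.1, P.2.2)) P.1

/-- Partial derivative in the second coordinate of `ℝ³`. -/
noncomputable def pdy (u : ℝ × ℝ × ℝ → ℝ) (P : ℝ × ℝ × ℝ) : ℝ :=
  deriv (fun s => u (P.1, s, P.2.2)) P.2.1

/-- Partial derivative in the third coordinate of `ℝ³`. -/
noncomputable def pdt (u : ℝ × ℝ × ℝ → ℝ) (P : ℝ × ℝ × ℝ) : ℝ :=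
  deriv (fun s => u (P.1, P.2.1, s)) P.2.2

/-- The Poissonization of the modified Lotka–Volterra Jacobi structure,
with `e₁ = cxy + (d+f)x`, `e₂ = cxy + (d−f)y`, on coordinates `(x,y,t)`. -/
noncomputable def brLV (a c d f : ℝ) (u v : ℝ × ℝ × ℝ → ℝ) (P : ℝ × ℝ × ℝ) : ℝ :=
  -(a * P.1 * P.2.1 / P.2.2) * (pdx u P * pdy v P - pdy u P * pdx v P)
  + (c * P.1 * P.2.1 + (d + f) * P.1) * (pdt u P * pdx v P - pdx u P * pdt v P)
  + (c * P.1 * P.2.1 + (d - f) * P.2.1) * (pdt u P * pdy v P - pdy u P * pdt v P)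

/-- The Casimir candidate
`Z = log t + (c/a)(x − y) + β log x − γ log y`, `β = (d−f)/a`, `γ = (d+f)/a`. -/
noncomputable def casimirLV (a c d f : ℝ) (P : ℝ × ℝ × ℝ) : ℝ :=
  Real.log P.2.2 + (c / a) * (P.1 - P.2.1)
    + ((d - f) / a) * Real.log P.1 - ((d + f) / a) * Real.log P.2.1

/-
The bracket `{u, v}` is linear in the gradient of `v`, so `u` is a Casimir at `P` as soon as the
three coefficients of `∂ₓv`, `∂ᵧv`, `∂ₜv` (the components of the Hamiltonian vector field of `u`)
vanish there. For `Z` one has `∂ₓZ = c/a + β/x`, `∂ᵧZ = -c/a - γ/y`, `∂ₜZ = 1/t`, and the three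
coefficients cancel identically because `a β = d - f` and `a γ = d + f`.
-/

lemma brLV_eq_zero_of_hamiltonian_eq_zero (a c d f : ℝ) (u v : ℝ × ℝ × ℝ → ℝ) (P : ℝ × ℝ × ℝ)
    (hx : a * P.1 * P.2.1 / P.2.2 * pdy u P + (c * P.1 * P.2.1 + (d + f) * P.1) * pdt u P = 0)
    (hy : -(a * P.1 * P.2.1 / P.2.2) * pdx u P + (c * P.1 * P.2.1 + (d - f) * P.2.1) * pdt u P = 0)
    (ht : (c * P.1 * P.2.1 + (d + f) * P.1) * pdx u P
      + (c * P.1 * P.2.1 + (d - f) * P.2.1) * pdy u P = 0) :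
    brLV a c d f u v P = 0 := by
  unfold brLV
  linear_combination pdx v P * hx + pdy v P * hy - pdt v P * ht

lemma pdx_casimirLV (a c d f : ℝ) (P : ℝ × ℝ × ℝ) (hx : 0 < P.1) :
    pdx (casimirLV a c d f) P = c / a + ((d - f) / a) / P.1 := by
  have h : HasDerivAt (fun s : ℝ => Real.log P.2.2 + (c / a) * (s - P.2.1)
      + ((d - f) / a) * Real.log s - ((d + f) / a) * Real.log P.2.1)
      (c / a + ((d - f) / a) / P.1) P.1 := by
    have := ((((hasDerivAt_id P.1).sub_const P.2.1).const_mul (c / a)).const_add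
      (Real.log P.2.2) |>.add ((Real.hasDerivAt_log hx.ne').const_mul ((d - f) / a))).sub_const
      (((d + f) / a) * Real.log P.2.1)
    simpa [div_eq_mul_inv] using this
  exact h.deriv

lemma pdy_casimirLV (a c d f : ℝ) (P : ℝ × ℝ × ℝ) (hy : 0 < P.2.1) :
    pdy (casimirLV a c d f) P = -(c / a) - ((d + f) / a) / P.2.1 := by
  have h : HasDerivAt (fun s : ℝ => Real.log P.2.2 + (c / a) * (P.1 - s)
      + ((d - f) / a) * Real.log P.1 - ((d + f) / a) * Real.log s)
      (-(c / a) - ((d + f) / a) / P.2.1) P.2.1 := by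
    have := ((((hasDerivAt_id P.2.1).const_sub P.1).const_mul (c / a)).const_add
      (Real.log P.2.2) |>.add_const (((d - f) / a) * Real.log P.1)).sub
      ((Real.hasDerivAt_log hy.ne').const_mul ((d + f) / a))
    exact this.congr_deriv (by ring)
  exact h.deriv

lemma pdt_casimirLV (a c d f : ℝ) (P : ℝ × ℝ × ℝ) (ht : 0 < P.2.2) :
    pdt (casimirLV a c d f) P = 1 / P.2.2 := by
  have h : HasDerivAt (fun s : ℝ => Real.log s + (c / a) * (P.1 - P.2.1)
      + ((d - f) / a) * Real.log P.1 - ((d + f) / a) * Real.log P.2.1)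
      (1 / P.2.2) P.2.2 := by
    have := (((Real.hasDerivAt_log ht.ne').add_const ((c / a) * (P.1 - P.2.1))).add_const
      (((d - f) / a) * Real.log P.1)).sub_const (((d + f) / a) * Real.log P.2.1)
    simpa [one_div] using this
  exact h.deriv

theorem stmt_16_general (a c d f : ℝ) (ha : a ≠ 0) (g : ℝ × ℝ × ℝ → ℝ) :
    ∀ P : ℝ × ℝ × ℝ, 0 < P.1 → 0 < P.2.1 → 0 < P.2.2 →
      brLV a c d f (casimirLV a c d f) g P = 0 := by
  intro P hx hy ht
  apply brLV_eq_zero_of_hamiltonian_eq_zero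
  all_goals
    simp only [pdx_casimirLV a c d f P hx, pdy_casimirLV a c d f P hy,
      pdt_casimirLV a c d f P ht]
    field_simp
    ring

/-- `Z` is a Casimir of the Poissonized modified Lotka–Volterra structure on
the positive octant. -/
theorem stmt_16 (a c d f : ℝ) (ha : a ≠ 0) (g : ℝ × ℝ × ℝ → ℝ)
    (hg : ∀ P : ℝ × ℝ × ℝ, 0 < P.1 → 0 < P.2.1 → 0 < P.2.2 → DifferentiableAt ℝ g P) :
    ∀ P : ℝ × ℝ × ℝ, 0 < P.1 → 0 < P.2.1 → 0 < P.2.2 →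
      brLV a c d f (casimirLV a c d f) g P = 0 :=
  stmt_16_general a c d f ha g
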